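/- arXiv:math/0107160 — 3 statements merged into one kernel-verified Lean document; each statement's English description precedes it below -/
import Mathlib

section
/- Let $h = \sum_{k \ge 0} h_k T^k \in \mathcal{O}[T]$ be a polynomial in a variable $T$ with coefficients $h_k$ holomorphic functions near $0 \in \mathbb{C}$, and define the 'logarithmic differential' $Dh = \sum_k (x h_k' + (k+1) h_{k+1}) T^k$ (corresponding to $x \cdot d/dx$ applied to $h$ with $T = \log x$). If $Dh = 0$, then $h$ is a constant in $\mathbb{C}$ (i.e., $h_0$ is constant and $h_k = 0$ for $k \ge 1$). -/
open Filter

private lemma const_of_deriv_eventually_zero (f : ℂ → ℂ) (hf : AnalyticAt ℂ f 0)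
    (hd : deriv f =ᶠ[nhds 0] fun _ => 0) : f =ᶠ[nhds 0] fun _ => f 0 := by
  obtain ⟨r, hr, H⟩ := Metric.eventually_nhds_iff_ball.1 (hf.eventually_analyticAt.and hd)
  refine Metric.eventually_nhds_iff_ball.2 ⟨r, hr, fun y hy => ?_⟩
  have := Convex.norm_image_sub_le_of_norm_deriv_le (C := 0)
    (fun x hx => (H x hx).1.differentiableAt)
    (fun x hx => by rw [(H x hx).2]; simp) (convex_ball 0 r)
    (Metric.mem_ball_self hr) hy
  have h0 : f y - f 0 = 0 := by
    have := le_antisymm (by simpa using this) (norm_nonneg (f y - f 0))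
    simpa using norm_eq_zero.1 this
  exact sub_eq_zero.1 h0

/-- One-variable log Poincaré lemma, kernel computation: if
`h = ∑ h_k (log x)^k` with `h_k` holomorphic germs at `0 ∈ ℂ`, and the logarithmic
differential `Dh = ∑ (x h_k' + (k+1) h_{k+1}) (log x)^k` vanishes, then `h` is a
constant: `h₀` is constant near `0` and `h_k = 0` near `0` for `k ≥ 1`. -/
theorem log_poincare_kernel (h : ℕ → ℂ → ℂ)
    (hfin : ∃ N, ∀ k, N ≤ k → h k = 0)
    (han : ∀ k, AnalyticAt ℂ (h k) 0)
    (hD : ∀ k, (fun x : ℂ => x * deriv (h k) x + ((k : ℂ) + 1) * h (k + 1) x)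
      =ᶠ[nhds 0] fun _ => 0) :
    (∃ c : ℂ, h 0 =ᶠ[nhds (0:ℂ)] fun _ => c) ∧
    (∀ k, 1 ≤ k → h k =ᶠ[nhds (0:ℂ)] fun _ => 0) := by
  obtain ⟨N, hN⟩ := hfin
  -- value at 0 of higher coefficients is 0
  have hval : ∀ k : ℕ, h (k + 1) 0 = 0 := by
    intro k
    have := (hD k).self_of_nhds
    simp only [zero_mul, zero_add] at this
    have hk1 : ((k : ℂ) + 1) ≠ 0 := Nat.cast_add_one_ne_zero k
    exact (mul_eq_zero.1 this).resolve_left hk1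
  -- key claim: every coefficient is eventually constant
  have key : ∀ m k : ℕ, N ≤ k + m → ∃ c : ℂ, h k =ᶠ[nhds (0:ℂ)] fun _ => c := by
    intro m
    induction m with
    | zero =>
      intro k hk
      exact ⟨0, by rw [hN k (by omega)]; rfl⟩
    | succ m ih =>
      intro k hk
      obtain ⟨c', hc'⟩ := ih (k + 1) (by omega)
      have hc0 : c' = 0 := by
        have := hc'.self_of_nhds
        simp only at this
        rw [← this, hval]
      rw [hc0] at hc'
      -- x * deriv (h k) x = 0 eventually
      have hxd : (fun x : ℂ => x * deriv (h k) x) =ᶠ[nhds 0] fun _ => 0 := by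
        filter_upwards [hD k, hc'] with x h1 h2
        rw [h2, mul_zero, add_zero] at h1
        exact h1
      -- deriv (h k) = 0 frequently in punctured nbhd, hence eventually
      have hfreq : ∃ᶠ x in nhdsWithin (0:ℂ) {(0:ℂ)}ᶜ, deriv (h k) x = 0 := by
        apply Filter.Eventually.frequently
        filter_upwards [nhdsWithin_le_nhds hxd, self_mem_nhdsWithin] with x h1 h2
        exact (mul_eq_zero.1 h1).resolve_left h2
      have hderan : AnalyticAt ℂ (deriv (h k)) 0 := by
        obtain ⟨r, hr, H⟩ := Metric.eventually_nhds_iff_ball.1 (han k).eventually_analyticAt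
        exact (AnalyticOnNhd.deriv (fun y hy => H y hy)) 0 (Metric.mem_ball_self hr)
      have hder : deriv (h k) =ᶠ[nhds (0:ℂ)] fun _ => 0 :=
        hderan.frequently_zero_iff_eventually_zero.1 hfreq
      exact ⟨h k 0, const_of_deriv_eventually_zero (h k) (han k) hder⟩
  constructor
  · exact key N 0 (by omega)
  · intro k hk
    obtain ⟨c, hc⟩ := key N k (by omega)
    have : c = 0 := by
      have := hc.self_of_nhds
      simp only at this
      obtain ⟨j, rfl⟩ := Nat.exists_eq_add_of_le hk
      rw [← this, Nat.add_comm, hval]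
    rwa [this] at hc
end

section
/- With notation as in the previous statement, the operator $D \colon \mathcal{O}[T] \to \mathcal{O}[T]$, $D(\sum_k g_k T^k) = \sum_k (x g_k' + (k+1) g_{k+1}) T^k$, is surjective: for every $h = \sum_k h_k T^k \in \mathcal{O}[T]$ there exists $g \in \mathcal{O}[T]$ with $Dg = h$. -/
/-!
If `f` is holomorphic at `0` with `f 0 = 0`, then `f = x q` with `q = dslope f 0` holomorphic,
and a primitive of `q` solves `x g' = f`. The system `x g_k' + (k + 1) g_{k+1} = h_k` is then
solved from the top degree down: the equation for `h_k` is solvable once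
`(k + 1) g_{k+1}(0) = h_k(0)`, which is arranged by adding a constant to `g_{k+1}`; this does not
affect the equation for `h_{k+1}`, which only involves `g_{k+1}'`.
-/

open Filter Topology Metric Function

theorem AnalyticAt.exists_eventually_hasDerivAt {q : ℂ → ℂ} {z : ℂ} (hq : AnalyticAt ℂ q z) :
    ∃ G : ℂ → ℂ, AnalyticAt ℂ G z ∧ ∀ᶠ x in 𝓝 z, HasDerivAt G (q x) x := by
  obtain ⟨r, hr, hball⟩ := Metric.eventually_nhds_iff_ball.mp hq.eventually_analyticAt
  obtain ⟨G, hG⟩ := DifferentiableOn.isExactOn_ball (c := z) (r := r)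
    fun x hx => (hball x hx).differentiableAt.differentiableWithinAt
  have hGdiff : DifferentiableOn ℂ G (ball z r) := fun x hx =>
    (hG x hx).differentiableAt.differentiableWithinAt
  exact ⟨G, hGdiff.analyticAt (ball_mem_nhds z hr), eventually_of_mem (ball_mem_nhds z hr) hG⟩

theorem exists_analyticAt_mul_deriv_eq {f : ℂ → ℂ} (hf : AnalyticAt ℂ f 0) (hf0 : f 0 = 0) :
    ∃ g : ℂ → ℂ, AnalyticAt ℂ g 0 ∧ (fun x => x * deriv g x) =ᶠ[𝓝 0] f := by
  obtain ⟨p, hp⟩ := hf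
  obtain ⟨G, hGan, hG⟩ :=
    AnalyticAt.exists_eventually_hasDerivAt ⟨_, hp.has_fpower_series_dslope_fslope⟩
  refine ⟨G, hGan, hG.mono fun x hx => ?_⟩
  simpa [hx.deriv, hf0] using sub_smul_dslope f 0 x

/-- The coefficient of `T^k` in `D g = h`. -/
def LogDiffEq (g h : ℕ → ℂ → ℂ) (k : ℕ) : Prop :=
  (fun x : ℂ => x * deriv (g k) x + ((k : ℂ) + 1) * g (k + 1) x) =ᶠ[𝓝 0] h k

theorem exists_logDiffEq_step {h : ℕ → ℂ → ℂ} {N n : ℕ} (hn : n < N) (han : AnalyticAt ℂ (h n) 0)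
    {g : ℕ → ℂ → ℂ} (hg : ∀ k, N < k → g k = 0) (hgan : ∀ k, AnalyticAt ℂ (g k) 0)
    (hgeq : ∀ k, n + 1 ≤ k → LogDiffEq g h k) :
    ∃ g' : ℕ → ℂ → ℂ, (∀ k, N < k → g' k = 0) ∧ (∀ k, AnalyticAt ℂ (g' k) 0) ∧
      ∀ k, n ≤ k → LogDiffEq g' h k := by
  set u : ℂ → ℂ := fun x => g (n + 1) x + (h n 0 / (n + 1) - g (n + 1) 0)
  have huan : AnalyticAt ℂ u 0 := (hgan _).add analyticAt_const
  obtain ⟨v, hvan, hv⟩ := exists_analyticAt_mul_deriv_eq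
    (f := fun x => h n x - (n + 1) * u x) (han.sub (analyticAt_const.mul huan))
    (by simp only [u]; field_simp; ring)
  refine ⟨update (update g (n + 1) u) n v, fun k hk => ?_, fun k => ?_, fun k hk => ?_⟩
  · rw [update_of_ne (by omega), update_of_ne (by omega), hg k hk]
  · rcases eq_or_ne k n with rfl | hkn
    · simpa
    rcases eq_or_ne k (n + 1) with rfl | hkn'
    · simpa [hkn]
    simpa [hkn, hkn'] using hgan k
  · obtain rfl | hk := Nat.eq_or_lt_of_le hk
    · simp only [LogDiffEq, update_self, update_of_ne (Nat.succ_ne_self n)]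
      filter_upwards [hv] with x hx
      linear_combination hx
    obtain rfl | hk := Nat.eq_or_lt_of_le hk
    · have : deriv u = deriv (g (n + 1)) := funext fun x => deriv_add_const _
      simpa [LogDiffEq, this, update_of_ne (show n + 1 + 1 ≠ n by omega)]
        using hgeq (n + 1) le_rfl
    · have hk' : k ≠ n ∧ k ≠ n + 1 ∧ k + 1 ≠ n ∧ k + 1 ≠ n + 1 := by omega
      simpa [LogDiffEq, update_apply, hk'] using hgeq k hk.le

theorem exists_logDiffEq_of_le {h : ℕ → ℂ → ℂ} (han : ∀ k, AnalyticAt ℂ (h k) 0) {N : ℕ}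
    (hN : ∀ k, N ≤ k → h k = 0) {n : ℕ} (hn : n ≤ N) :
    ∃ g : ℕ → ℂ → ℂ, (∀ k, N < k → g k = 0) ∧ (∀ k, AnalyticAt ℂ (g k) 0) ∧
      ∀ k, n ≤ k → LogDiffEq g h k := by
  induction hn using Nat.decreasingInduction with
  | self => exact ⟨0, fun _ _ => rfl, fun _ => analyticAt_const,
    fun k hk => .of_forall fun x => by simp [hN k hk]⟩
  | of_succ n hn ih =>
    obtain ⟨g, hg, hgan, hgeq⟩ := ih
    exact exists_logDiffEq_step hn (han n) hg hgan hgeq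

/-- One-variable log Poincaré lemma, surjectivity: the logarithmic differential
`D(∑ g_k T^k) = ∑ (x g_k' + (k+1) g_{k+1}) T^k` on polynomials in `T = log x` with
holomorphic germ coefficients is surjective. -/
theorem log_poincare_surjective (h : ℕ → ℂ → ℂ)
    (hfin : ∃ N, ∀ k, N ≤ k → h k = 0)
    (han : ∀ k, AnalyticAt ℂ (h k) 0) :
    ∃ g : ℕ → ℂ → ℂ,
      (∃ N, ∀ k, N ≤ k → g k = 0) ∧
      (∀ k, AnalyticAt ℂ (g k) 0) ∧
      (∀ k, (fun x : ℂ => x * deriv (g k) x + ((k : ℂ) + 1) * g (k + 1) x)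
        =ᶠ[nhds (0:ℂ)] h k) := by
  obtain ⟨N, hN⟩ := hfin
  obtain ⟨g, hg, hgan, hgeq⟩ := exists_logDiffEq_of_le han hN (Nat.zero_le N)
  exact ⟨g, ⟨N + 1, hg⟩, hgan, fun k => hgeq k k.zero_le⟩
end

section
/- Let $D \colon \mathcal{O}_2[T_1, T_2] \to \mathcal{O}_2[T_1, T_2]$ be defined on $h = \sum_{k_1,k_2} h_{k_1,k_2} T_1^{k_1} T_2^{k_2}$ (with $h_{k_1,k_2}$ germs of holomorphic functions in $(x_1,x_2)$ at the origin) by $D(h) = \sum_{k_1,k_2} \big( x_1 \partial_{x_1} h_{k_1,k_2} - x_2 \partial_{x_2} h_{k_1,k_2} + (k_1+1) h_{k_1+1,k_2} - (k_2+1) h_{k_1,k_2+1} \big) T_1^{k_1} T_2^{k_2}$. If $D(h) = 0$, then there exist germs $h_k$ such that $h_{k_1,k_2} = \binom{k_1+k_2}{k_1} h_{k_1+k_2}$, and each $h_k$, expanded as a power series $\sum_{l_1,l_2} a_{k,l_1,l_2} x_1^{l_1} x_2^{l_2}$, satisfies $a_{k,l_1,l_2} = 0$ unless $l_1 = l_2$.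 -/
open Filter

/-!
The operator `u ↦ x₁ ∂₁u - x₂ ∂₂u` is differentiation along the flow
`σ ↦ (e^σ x₁, e^{-σ} x₂)`, which preserves `x₁ x₂`. If `x₁ ∂₁u - x₂ ∂₂u = v(x₁ x₂)`, then `u`
grows with constant slope `v(x₁ x₂)` along each flow line; as the flow is `2πi`-periodic, `v = 0`,
so `u` is constant along flow lines and hence a function of `x₁ x₂`. Descending induction on
`k₁ + k₂` shows in this way that every coefficient `h_{k₁,k₂}` is a function `g_{k₁,k₂}` of
`x₁ x₂`, and then `D(h) = 0` says `(k₁ + 1) g_{k₁+1,k₂} = (k₂ + 1) g_{k₁,k₂+1}`, a recursion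
solved by binomial coefficients.
-/

open Complex Metric Topology

noncomputable def relLogDeriv (u : ℂ × ℂ → ℂ) (z : ℂ × ℂ) : ℂ :=
  z.1 * deriv (fun w => u (w, z.2)) z.1 - z.2 * deriv (fun w => u (z.1, w)) z.2

noncomputable def fiberFlow (σ : ℂ) (z : ℂ × ℂ) : ℂ × ℂ :=
  (exp σ * z.1, exp (-σ) * z.2)

theorem tendsto_fst_mul_snd_nhds_zero {R : Type*} [TopologicalSpace R] [MulZeroClass R]
    [ContinuousMul R] : Tendsto (fun z : R × R => z.1 * z.2) (𝓝 0) (𝓝 0) :=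
  continuous_mul.tendsto' 0 0 (mul_zero 0)

section fiberFlow

variable (z : ℂ × ℂ)

theorem fiberFlow_mul (σ : ℂ) : (fiberFlow σ z).1 * (fiberFlow σ z).2 = z.1 * z.2 := by
  simp only [fiberFlow, exp_neg]
  field_simp

theorem fiberFlow_zero : fiberFlow 0 z = z := by
  simp [fiberFlow]

theorem fiberFlow_two_pi_I : fiberFlow (2 * Real.pi * I) z = z := by
  simp [fiberFlow, exp_neg, exp_two_pi_mul_I]

theorem fiberFlow_log_div {c : ℂ} (hz : z.2 ≠ 0) (hc : c ≠ 0) :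
    fiberFlow (log (z.2 / c)) z = (z.1 * z.2 / c, c) := by
  simp only [fiberFlow, exp_neg, exp_log (div_ne_zero hz hc), Prod.mk.injEq]
  constructor <;> field_simp

theorem hasDerivAt_fiberFlow (τ : ℂ) :
    HasDerivAt (fun σ => fiberFlow σ z) ((fiberFlow τ z).1, -(fiberFlow τ z).2) τ := by
  refine ((hasDerivAt_exp τ).mul_const z.1).prodMk ?_
  show HasDerivAt _ (-(exp (-τ) * z.2)) τ
  simpa using ((hasDerivAt_exp (-τ)).comp τ (hasDerivAt_neg τ)).mul_const z.2

theorem continuous_fiberFlow : Continuous fun σ => fiberFlow σ z :=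
  continuous_iff_continuousAt.2 fun τ => (hasDerivAt_fiberFlow z τ).continuousAt

theorem norm_fiberFlow_lt_iff (σ : ℂ) (r : ℝ) :
    ‖fiberFlow σ z‖ < r ↔ Real.exp σ.re * ‖z.1‖ < r ∧ Real.exp (-σ.re) * ‖z.2‖ < r := by
  simp [fiberFlow, Prod.norm_def, norm_exp]

theorem convex_setOf_fiberFlow_mem_ball (r : ℝ) :
    Convex ℝ {σ : ℂ | fiberFlow σ z ∈ ball 0 r} := by
  have hord : Set.OrdConnected {t : ℝ | Real.exp t * ‖z.1‖ < r ∧ Real.exp (-t) * ‖z.2‖ < r} :=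
    ⟨fun t₁ ht₁ t₂ ht₂ t ht =>
      ⟨(mul_le_mul_of_nonneg_right (Real.exp_le_exp.2 ht.2) (norm_nonneg _)).trans_lt ht₂.1,
        (mul_le_mul_of_nonneg_right (Real.exp_le_exp.2 (neg_le_neg ht.1)) (norm_nonneg _)).trans_lt
          ht₁.2⟩⟩
  have hS : {σ : ℂ | fiberFlow σ z ∈ ball 0 r} =
      reLm ⁻¹' {t : ℝ | Real.exp t * ‖z.1‖ < r ∧ Real.exp (-t) * ‖z.2‖ < r} := by
    ext σ
    simp only [Set.mem_preimage, Set.mem_ofPred_eq, mem_ball_zero_iff, norm_fiberFlow_lt_iff,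
      reLm_coe]
  rw [hS]
  exact hord.convex.linear_preimage reLm

end fiberFlow

theorem HasFDerivAt.relLogDeriv_eq {u : ℂ × ℂ → ℂ} {L : ℂ × ℂ →L[ℂ] ℂ} {w : ℂ × ℂ}
    (hu : HasFDerivAt u L w) : relLogDeriv u w = L (w.1, -w.2) := by
  have h₁ : HasDerivAt (fun a => u (a, w.2)) (L (1, 0)) w.1 :=
    (hu.comp (𝕜 := ℂ) w.1 (hasFDerivAt_prodMk_left w.1 w.2)).hasDerivAt
  have h₂ : HasDerivAt (fun b => u (w.1, b)) (L (0, 1)) w.2 :=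
    (hu.comp (𝕜 := ℂ) w.2 (hasFDerivAt_prodMk_right w.1 w.2)).hasDerivAt
  have hw : ((w.1, -w.2) : ℂ × ℂ) = w.1 • ((1 : ℂ), (0 : ℂ)) + (-w.2) • ((0 : ℂ), (1 : ℂ)) := by
    simp
  rw [relLogDeriv, h₁.deriv, h₂.deriv, hw, map_add, map_smul, map_smul, smul_eq_mul, smul_eq_mul]
  ring

theorem DifferentiableAt.hasDerivAt_comp_fiberFlow {u : ℂ × ℂ → ℂ} {z : ℂ × ℂ} {τ : ℂ}
    (hu : DifferentiableAt ℂ u (fiberFlow τ z)) :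
    HasDerivAt (fun σ => u (fiberFlow σ z)) (relLogDeriv u (fiberFlow τ z)) τ := by
  rw [hu.hasFDerivAt.relLogDeriv_eq]
  exact hu.hasFDerivAt.comp_hasDerivAt τ (hasDerivAt_fiberFlow z τ)

theorem exists_ne_zero_eventually_div_mem_ball {r : ℝ} (hr : 0 < r) :
    ∃ c : ℂ, c ≠ 0 ∧ ∀ᶠ y in 𝓝 (0 : ℂ), (y / c, c) ∈ ball (0 : ℂ × ℂ) r := by
  refine ⟨((r / 2 : ℝ) : ℂ), by simp [hr.ne'], ?_⟩
  refine ((continuous_id.div_const _).prodMk continuous_const).tendsto' 0 _ rfl |>.eventually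
    (isOpen_ball.mem_nhds ?_)
  simp [Prod.norm_def, abs_of_pos hr, hr]

theorem dense_setOf_snd_ne_zero : Dense {z : ℂ × ℂ | z.2 ≠ 0} :=
  (dense_compl_singleton (0 : ℂ)).preimage isOpenMap_snd

section Kernel

variable {u : ℂ × ℂ → ℂ} {v : ℂ → ℂ}

theorem apply_fiberFlow_eq {r : ℝ} (hu : ∀ w ∈ ball (0 : ℂ × ℂ) r, DifferentiableAt ℂ u w)
    (huv : ∀ w ∈ ball (0 : ℂ × ℂ) r, relLogDeriv u w = v (w.1 * w.2))
    {z : ℂ × ℂ} (hz : z ∈ ball 0 r) {σ : ℂ} (hσ : fiberFlow σ z ∈ ball 0 r) :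
    u (fiberFlow σ z) = u z + σ * v (z.1 * z.2) := by
  set S := {τ : ℂ | fiberFlow τ z ∈ ball 0 r}
  have hderiv : ∀ τ ∈ S,
      HasDerivAt (fun τ => u (fiberFlow τ z) - τ * v (z.1 * z.2)) 0 τ := by
    intro τ hτ
    have h := (hu _ hτ).hasDerivAt_comp_fiberFlow.sub
      ((hasDerivAt_id τ).mul_const (v (z.1 * z.2)))
    rwa [huv _ hτ, fiberFlow_mul, one_mul, sub_self] at h
  have hconst := isOpen_ball.preimage (continuous_fiberFlow z) |>.is_const_of_deriv_eq_zero
    (convex_setOf_fiberFlow_mem_ball z r).isPreconnected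
    (fun τ hτ => (hderiv τ hτ).differentiableAt.differentiableWithinAt)
    (fun τ hτ => (hderiv τ hτ).deriv) hσ (show (0 : ℂ) ∈ S by simpa [S, fiberFlow_zero] using hz)
  simp only [fiberFlow_zero, zero_mul, sub_zero] at hconst
  rw [← hconst]
  ring

theorem eventuallyEq_zero_of_relLogDeriv_eq (hu : AnalyticAt ℂ u 0)
    (huv : relLogDeriv u =ᶠ[𝓝 0] fun z => v (z.1 * z.2)) : v =ᶠ[𝓝 0] 0 := by
  obtain ⟨r, hr, hball⟩ := eventually_nhds_iff_ball.1 (hu.eventually_analyticAt.and huv)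
  have hv : ∀ z ∈ ball (0 : ℂ × ℂ) r, v (z.1 * z.2) = 0 := by
    intro z hz
    have h := apply_fiberFlow_eq (fun w hw => (hball w hw).1.differentiableAt)
      (fun w hw => (hball w hw).2) hz (σ := 2 * Real.pi * I) (by rwa [fiberFlow_two_pi_I])
    rw [fiberFlow_two_pi_I, left_eq_add, mul_eq_zero] at h
    exact h.resolve_left two_pi_I_ne_zero
  obtain ⟨c, hc, hsection⟩ := exists_ne_zero_eventually_div_mem_ball hr
  filter_upwards [hsection] with y hy
  simpa [div_mul_cancel₀ y hc] using hv _ hy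

theorem exists_analyticAt_eventuallyEq_comp_mul_of_relLogDeriv_eq (hu : AnalyticAt ℂ u 0)
    (huv : relLogDeriv u =ᶠ[𝓝 0] fun z => v (z.1 * z.2)) :
    ∃ g : ℂ → ℂ, AnalyticAt ℂ g 0 ∧ u =ᶠ[𝓝 0] fun z => g (z.1 * z.2) := by
  have hrel : relLogDeriv u =ᶠ[𝓝 0] fun z => (0 : ℂ → ℂ) (z.1 * z.2) :=
    huv.trans ((eventuallyEq_zero_of_relLogDeriv_eq hu huv).comp_tendsto
      tendsto_fst_mul_snd_nhds_zero)
  obtain ⟨r, hr, hball⟩ := eventually_nhds_iff_ball.1 (hu.eventually_analyticAt.and hrel)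
  obtain ⟨c, hc, hsection⟩ := exists_ne_zero_eventually_div_mem_ball hr
  set U := ball (0 : ℂ × ℂ) r ∩ {z | (z.1 * z.2 / c, c) ∈ ball (0 : ℂ × ℂ) r}
  have hU : IsOpen U := isOpen_ball.inter (isOpen_ball.preimage (by fun_prop))
  have hU₀ : (0 : ℂ × ℂ) ∈ U := ⟨mem_ball_self hr, by simpa [hr] using hsection.self_of_nhds⟩
  refine ⟨fun y => u (y / c, c),
    (hball _ hsection.self_of_nhds).1.comp (f := fun y : ℂ => (y / c, c)) (by fun_prop),
    eventuallyEq_of_mem (hU.mem_nhds hU₀) ?_⟩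
  -- Off the axis `z.2 = 0` the flow connects `z` to `(z.1 * z.2 / c, c)`; continuity does the rest.
  have hoff : Set.EqOn u (fun z => u (z.1 * z.2 / c, c)) (U ∩ {z | z.2 ≠ 0}) := by
    rintro z ⟨⟨hz, hz'⟩, hz₂⟩
    have h := apply_fiberFlow_eq (fun w hw => (hball w hw).1.differentiableAt)
      (fun w hw => (hball w hw).2) hz (σ := log (z.2 / c))
      (by rwa [fiberFlow_log_div z hz₂ hc])
    simpa [fiberFlow_log_div z hz₂ hc] using h.symm
  refine hoff.of_subset_closure (fun z hz => (hball z hz.1).1.continuousAt.continuousWithinAt)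
    (fun z hz => ((hball _ hz.2).1.continuousAt.comp (f := fun z : ℂ × ℂ => (z.1 * z.2 / c, c))
      (by fun_prop)).continuousWithinAt) Set.inter_subset_left
    (dense_setOf_snd_ne_zero.open_subset_closure_inter hU)

end Kernel

theorem forall_forall_of_succ_of_ge {P : ℕ → ℕ → Prop} (N : ℕ)
    (hbase : ∀ k₁ k₂, N ≤ k₁ ∨ N ≤ k₂ → P k₁ k₂)
    (hstep : ∀ k₁ k₂, P (k₁ + 1) k₂ → P k₁ (k₂ + 1) → P k₁ k₂) (k₁ k₂ : ℕ) : P k₁ k₂ := by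
  suffices h : ∀ n k₁ k₂, 2 * N ≤ k₁ + k₂ + n → P k₁ k₂ from h (2 * N) k₁ k₂ le_add_self
  intro n
  induction n with
  | zero => exact fun k₁ k₂ hk => hbase k₁ k₂ (by omega)
  | succ n ih => exact fun k₁ k₂ hk => hstep k₁ k₂ (ih _ _ (by omega)) (ih _ _ (by omega))

theorem eq_choose_smul_of_succ_smul_eq {K M : Type*} [DivisionRing K] [CharZero K]
    [AddCommGroup M] [Module K M] {G : ℕ → ℕ → M}
    (hG : ∀ k₁ k₂ : ℕ, ((k₁ : K) + 1) • G (k₁ + 1) k₂ = ((k₂ : K) + 1) • G k₁ (k₂ + 1))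
    (k₁ k₂ : ℕ) : G k₁ k₂ = ((k₁ + k₂).choose k₁ : K) • G (k₁ + k₂) 0 := by
  induction k₂ generalizing k₁ with
  | zero => simp
  | succ k₂ ih =>
    set n := k₁ + (k₂ + 1)
    have hchoose : (n.choose (k₁ + 1) : K) * (k₁ + 1) = (n.choose k₁ : K) * (k₂ + 1) := by
      have h := Nat.choose_succ_right_eq n k₁
      rw [show n - k₁ = k₂ + 1 by omega] at h
      exact_mod_cast h
    have hk₂ : (k₂ : K) + 1 ≠ 0 := Nat.cast_add_one_ne_zero k₂
    rw [← inv_smul_smul₀ hk₂ (G k₁ (k₂ + 1)), ← hG, ih, show k₁ + 1 + k₂ = n by omega, smul_smul,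
      smul_smul]
    congr 1
    rw [mul_assoc, inv_mul_eq_iff_eq_mul₀ hk₂, ← Nat.cast_comm, hchoose, Nat.cast_comm]

theorem relLogDeriv_eventuallyEq_of_eventuallyEq_comp_mul {u u₁ u₂ : ℂ × ℂ → ℂ}
    {g₁ g₂ : ℂ → ℂ} {a b : ℂ}
    (hD : (fun z => relLogDeriv u z + a * u₁ z - b * u₂ z) =ᶠ[𝓝 0] fun _ => 0)
    (h₁ : u₁ =ᶠ[𝓝 0] fun z => g₁ (z.1 * z.2)) (h₂ : u₂ =ᶠ[𝓝 0] fun z => g₂ (z.1 * z.2)) :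
    relLogDeriv u =ᶠ[𝓝 0] fun z => (b • g₂ - a • g₁) (z.1 * z.2) := by
  filter_upwards [hD, h₁, h₂] with z hz hz₁ hz₂
  rw [hz₁, hz₂] at hz
  simp only [Pi.sub_apply, Pi.smul_apply, smul_eq_mul]
  linear_combination hz

/-- Relative log Poincaré lemma for `f(x₁,x₂) = x₁x₂`, kernel computation: if
`h = ∑ h_{k₁,k₂} T₁^{k₁} T₂^{k₂}` (with `T_i = log x_i` and `h_{k₁,k₂}` holomorphic
germs at `0 ∈ ℂ²`) satisfies `D(h) = 0` for the relative logarithmic differential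
`D(h) = ∑ (x₁∂₁h_{k₁,k₂} - x₂∂₂h_{k₁,k₂} + (k₁+1)h_{k₁+1,k₂} - (k₂+1)h_{k₁,k₂+1}) T₁^{k₁}T₂^{k₂}`,
then there are germs `h_k` with `h_{k₁,k₂} = C(k₁+k₂,k₁) h_{k₁+k₂}`, and each `h_k`
has power series supported on the diagonal, i.e. is a holomorphic function of
`y = x₁x₂`. -/
theorem relative_log_poincare_kernel (h : ℕ → ℕ → ℂ × ℂ → ℂ)
    (hfin : ∃ N, ∀ k₁ k₂, N ≤ k₁ ∨ N ≤ k₂ → h k₁ k₂ = 0)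
    (han : ∀ k₁ k₂, AnalyticAt ℂ (h k₁ k₂) 0)
    (hD : ∀ k₁ k₂,
      (fun z : ℂ × ℂ =>
          z.1 * deriv (fun w => h k₁ k₂ (w, z.2)) z.1
            - z.2 * deriv (fun w => h k₁ k₂ (z.1, w)) z.2
            + ((k₁ : ℂ) + 1) * h (k₁ + 1) k₂ z
            - ((k₂ : ℂ) + 1) * h k₁ (k₂ + 1) z)
        =ᶠ[nhds (0 : ℂ × ℂ)] fun _ => 0) :
    ∃ φ : ℕ → ℂ → ℂ,
      (∀ k, AnalyticAt ℂ (φ k) 0) ∧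
      (∀ k₁ k₂, h k₁ k₂
        =ᶠ[nhds (0 : ℂ × ℂ)] fun z => ((k₁ + k₂).choose k₁ : ℂ) * φ (k₁ + k₂) (z.1 * z.2)) := by
  obtain ⟨N, hN⟩ := hfin
  have hrel (k₁ k₂ : ℕ) {g₁ g₂ : ℂ → ℂ} :=
    relLogDeriv_eventuallyEq_of_eventuallyEq_comp_mul (u := h k₁ k₂) (g₁ := g₁) (g₂ := g₂)
      (hD k₁ k₂)
  have hfactor : ∀ k₁ k₂, ∃ g : ℂ → ℂ, AnalyticAt ℂ g 0 ∧
      h k₁ k₂ =ᶠ[𝓝 0] fun z => g (z.1 * z.2) :=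
    forall_forall_of_succ_of_ge N
      (fun k₁ k₂ hk => ⟨0, analyticAt_const, by rw [hN k₁ k₂ hk]; rfl⟩)
      fun k₁ k₂ ⟨_, _, h₁⟩ ⟨_, _, h₂⟩ =>
        exists_analyticAt_eventuallyEq_comp_mul_of_relLogDeriv_eq (han k₁ k₂) (hrel k₁ k₂ h₁ h₂)
  choose g hg_an hg using hfactor
  have hrec : ∀ k₁ k₂ : ℕ, ((k₁ : ℂ) + 1) • (g (k₁ + 1) k₂ : Germ (𝓝 (0 : ℂ)) ℂ) =
      ((k₂ : ℂ) + 1) • (g k₁ (k₂ + 1) : Germ (𝓝 (0 : ℂ)) ℂ) := by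
    intro k₁ k₂
    rw [← Germ.coe_smul, ← Germ.coe_smul, Germ.coe_eq]
    filter_upwards [eventuallyEq_zero_of_relLogDeriv_eq (han k₁ k₂)
      (hrel k₁ k₂ (hg _ _) (hg _ _))] with y hy
    simp only [Pi.sub_apply, Pi.smul_apply, smul_eq_mul, Pi.zero_apply] at hy ⊢
    linear_combination -hy
  refine ⟨fun k => g k 0, fun k => hg_an k 0, fun k₁ k₂ => (hg k₁ k₂).trans ?_⟩
  have hchoose := eq_choose_smul_of_succ_smul_eq
    (G := fun k₁ k₂ => (g k₁ k₂ : Germ (𝓝 (0 : ℂ)) ℂ)) hrec k₁ k₂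
  rw [← Germ.coe_smul, Germ.coe_eq] at hchoose
  exact hchoose.comp_tendsto tendsto_fst_mul_snd_nhds_zero
end
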